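/- Let (N₁, (W, S), N₂) be a net-abstraction, let p, q be chain-agglomerable places of N₂, and let N₃ be the chain agglomeration of p and q in N₂ with new place a, where a ∉ W ∪ P₁ ∪ P₂. Let W' = W ∪ {p, q, a} and let S' be the set of valuations e : W' → ℕ such that the restriction of e to W lies in S and e(a) = e(p) + e(q). Then (N₁, (W', S'), N₃) is a net-abstraction. -/

import Mathlib

/-! Marked Petri nets with places drawn from a type `X` and transitions drawn from a type `T`.
Markings are total functions `X → ℕ`; a marking (valuation) "on a set of places `V`" is a
function that vanishes outside of `V`. -/

/-- The restriction of a valuation to a set `V` (zero outside `V`). -/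
noncomputable def restrictTo {X : Type} (V : Set X) (f : X → ℕ) : X → ℕ :=
  V.indicator f

/-- Valuations on `V`: functions vanishing outside `V`. -/
def ValuationOn {X : Type} (V : Set X) : Set (X → ℕ) :=
  {f | ∀ x, x ∉ V → f x = 0}

/-- Lifting of a set `E` of valuations on `V` to a superset `U` of `V`:
the valuations on `U` whose restriction to `V` lies in `E`. -/
def liftTo {X : Type} (E : Set (X → ℕ)) (V U : Set X) : Set (X → ℕ) :=
  {f | f ∈ ValuationOn U ∧ restrictTo V f ∈ E}

/-- Projection of a set `E` of valuations to a subset `U`: the restrictions to `U`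
of the members of `E`. -/
def projTo {X : Type} (E : Set (X → ℕ)) (U : Set X) : Set (X → ℕ) :=
  (restrictTo U) '' E

/-- A marked Petri net `N = (P, T, Pre, Post, m₀)`. The set of places is `N.places ⊆ X`
and the set of transitions is `N.trans ⊆ T`. -/
structure PNet (X T : Type) where
  places : Set X
  trans : Set T
  Pre : T → X → ℕ
  Post : T → X → ℕ
  m0 : X → ℕ

namespace PNet

variable {X T : Type}

/-- Well-formedness: the sets of places and transitions are finite, and the initial
marking as well as the pre/post-conditions of the transitions vanish outside the places. -/
def WF (N : PNet X T) : Prop :=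
  N.places.Finite ∧ N.trans.Finite ∧
    (∀ x, x ∉ N.places → N.m0 x = 0) ∧
    (∀ t ∈ N.trans, ∀ x, x ∉ N.places → N.Pre t x = 0 ∧ N.Post t x = 0)

/-- A transition `t` is enabled at marking `m` if `m ≥ Pre(t)` pointwise. -/
def Enabled (N : PNet X T) (t : T) (m : X → ℕ) : Prop :=
  t ∈ N.trans ∧ ∀ x, N.Pre t x ≤ m x

/-- The marking obtained by firing `t` at `m` : `m - Pre(t) + Post(t)`. -/
def fire (N : PNet X T) (t : T) (m : X → ℕ) : X → ℕ :=
  fun x => m x - N.Pre t x + N.Post t x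

/-- One-step firing relation between markings. -/
def Step (N : PNet X T) (m m' : X → ℕ) : Prop :=
  ∃ t, N.Enabled t m ∧ m' = N.fire t m

/-- The reachability set (state space) `R(N)`: all markings reachable from `m₀`. -/
def R (N : PNet X T) : Set (X → ℕ) :=
  {m | Relation.ReflTransGen N.Step N.m0 m}

/-- `FireSeq N m σ m'` : the firing sequence `σ` can be fired from `m`, yielding `m'`. -/
def FireSeq (N : PNet X T) : (X → ℕ) → List T → (X → ℕ) → Prop
  | m, [], m' => m' = m
  | m, t :: σ, m' => N.Enabled t m ∧ FireSeq N (N.fire t m) σ m'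

/-- The sequence `σ` is firable from the marking `m`. -/
def Firable (N : PNet X T) (m : X → ℕ) (σ : List T) : Prop :=
  ∃ m', N.FireSeq m σ m'

/-- Displacement `Δ(t) = Post(t) - Pre(t) : P → ℤ` of a transition. -/
def delta (N : PNet X T) (t : T) : X → ℤ :=
  fun x => (N.Post t x : ℤ) - (N.Pre t x : ℤ)

/-- Displacement `Δ(σ)` of a firing sequence. -/
def deltaSeq (N : PNet X T) (σ : List T) : X → ℤ :=
  fun x => (σ.map (fun t => N.delta t x)).sum

/-- `t` is a redundant transition witnessed by the sequence `σ`: `σ` avoids `t`,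
has the same displacement as `t`, and is firable from the marking `Pre(t)`
(i.e. `H(t) ≥ H(σ)`). -/
def RedundantTransition (N : PNet X T) (t : T) (σ : List T) : Prop :=
  t ∈ N.trans ∧ (∀ u ∈ σ, u ∈ N.trans ∧ u ≠ t) ∧
    N.deltaSeq σ = N.delta t ∧ N.Firable (N.Pre t) σ

/-- The net obtained by removing transition `t`. -/
def removeTrans (N : PNet X T) (t : T) : PNet X T :=
  { N with trans := N.trans \ {t} }

/-- `p` is a redundant place, witnessed by the set of places `I ⊆ P ∖ {p}`, the
valuation `v` (positive on `I ∪ {p}`) and the constant `b`. -/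
def RedundantPlace (N : PNet X T) (p : X) (I : Finset X) (v : X → ℕ) (b : ℕ) : Prop :=
  p ∈ N.places ∧ ↑I ⊆ N.places \ {p} ∧ v p ≠ 0 ∧ (∀ q ∈ I, v q ≠ 0) ∧
    ((b : ℤ) = (v p : ℤ) * (N.m0 p : ℤ) - ∑ q ∈ I, (v q : ℤ) * (N.m0 q : ℤ)) ∧
    (∀ t ∈ N.trans,
      (v p : ℤ) * (N.Pre t p : ℤ) - ∑ q ∈ I, (v q : ℤ) * (N.Pre t q : ℤ) ≤ (b : ℤ)) ∧
    (∀ t ∈ N.trans,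
      (v p : ℤ) * ((N.Post t p : ℤ) - (N.Pre t p : ℤ))
        = ∑ q ∈ I, (v q : ℤ) * ((N.Post t q : ℤ) - (N.Pre t q : ℤ)))

/-- The net obtained by removing place `p` (restriction to `P ∖ {p}`). -/
noncomputable def removePlace (N : PNet X T) (p : X) : PNet X T where
  places := N.places \ {p}
  trans := N.trans
  Pre := fun t => restrictTo (N.places \ {p}) (N.Pre t)
  Post := fun t => restrictTo (N.places \ {p}) (N.Post t)
  m0 := restrictTo (N.places \ {p}) N.m0

/-- Place `a` is the sum of places `p` and `q`, written `a = p ⊞ q`. -/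
def IsSumPlace (N : PNet X T) (a p q : X) : Prop :=
  N.m0 a = N.m0 p + N.m0 q ∧
    ∀ t ∈ N.trans, N.Pre t a = N.Pre t p + N.Pre t q ∧ N.Post t a = N.Post t p + N.Post t q

/-- Places `p` and `q` are chain-agglomerable, witnessed by the transition `t`. -/
def ChainAgglomerable (N : PNet X T) (p q : X) (t : T) : Prop :=
  p ∈ N.places ∧ q ∈ N.places ∧ p ≠ q ∧ t ∈ N.trans ∧
    N.Pre t p = 1 ∧ (∀ r, r ≠ p → N.Pre t r = 0) ∧
    N.Post t q = 1 ∧ (∀ r, r ≠ q → N.Post t r = 0) ∧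
    (∀ t' ∈ N.trans, t' ≠ t → N.Post t' q = 0) ∧
    N.m0 q = 0

/-- Agglomeration of the set of places `A` as the fresh place `a`: the places become
`(P ∖ A) ∪ {a}`, the place `a` behaves as the sum of the places of `A`, and everything
else is unchanged. -/
noncomputable def agglom [DecidableEq X] (N : PNet X T) (A : Finset X) (a : X) : PNet X T where
  places := (N.places \ ↑A) ∪ {a}
  trans := N.trans
  Pre := fun u => Function.update (restrictTo (N.places \ ↑A) (N.Pre u)) a (∑ x ∈ A, N.Pre u x)
  Post := fun u => Function.update (restrictTo (N.places \ ↑A) (N.Post u)) a (∑ x ∈ A, N.Post u x)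
  m0 := Function.update (restrictTo (N.places \ ↑A) N.m0) a (∑ x ∈ A, N.m0 x)

/-- `(p, t)` is a source-sink pair. -/
def SourceSink (N : PNet X T) (p : X) (t : T) : Prop :=
  p ∈ N.places ∧ t ∈ N.trans ∧
    (∀ u ∈ N.trans, N.Post u p = 0) ∧
    (∀ u ∈ N.trans, u ≠ t → N.Pre u p = 0) ∧
    N.Pre t p = 1 ∧ (∀ r, r ≠ p → N.Pre t r = 0) ∧
    (∀ r, N.Post t r = 0)

/-- The net obtained by removing the source-sink pair `(p, t)`. -/
noncomputable def removeSourceSink (N : PNet X T) (p : X) (t : T) : PNet X T where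
  places := N.places \ {p}
  trans := N.trans \ {t}
  Pre := fun u => restrictTo (N.places \ {p}) (N.Pre u)
  Post := fun u => restrictTo (N.places \ {p}) (N.Post u)
  m0 := restrictTo (N.places \ {p}) N.m0

end PNet

/-- `(N₁, (W, S), N₂)` is a net-abstraction:
`R(N₁) = ((R(N₂) ↑ V) ∩ (S ↑ V)) ↓ P₁` where `V = W ∪ P₁ ∪ P₂`. -/
def NetAbstraction {X T₁ T₂ : Type} (N₁ : PNet X T₁) (W : Set X) (S : Set (X → ℕ))
    (N₂ : PNet X T₂) : Prop :=
  N₁.R = projTo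
    (liftTo N₂.R N₂.places (W ∪ N₁.places ∪ N₂.places) ∩
      liftTo S W (W ∪ N₁.places ∪ N₂.places))
    N₁.places

/-! Merging `p` and `q` into `a = p + q` forgets only how the tokens of `a` are split between
`p` and `q`. Firing `t` moves a token from `p` to `q` without changing the merged marking, and
`t` is the only transition that puts tokens on `q`. So every reachable marking of the
agglomerated net is the image of a reachable marking of `N₂` with `q` empty: to simulate a
transition `u ≠ t`, first move exactly `Pre(u)(q)` tokens to `q`; after firing `u`, `q` is
empty again. Firing `t` further then realises any prescribed split, in particular the one
recorded by a valuation satisfying `a = p + q`. -/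

section Valuations

variable {X : Type} {U V : Set X} {f : X → ℕ} {x : X}

lemma restrictTo_of_mem (h : x ∈ V) : restrictTo V f x = f x := Set.indicator_of_mem h f

lemma restrictTo_of_notMem (h : x ∉ V) : restrictTo V f x = 0 := Set.indicator_of_notMem h f

lemma restrictTo_mem_valuationOn : restrictTo V f ∈ ValuationOn V :=
  fun _ => restrictTo_of_notMem

lemma restrictTo_restrictTo_of_subset (h : U ⊆ V) :
    restrictTo U (restrictTo V f) = restrictTo U f := by
  simp only [restrictTo, Set.indicator_indicator, Set.inter_eq_left.mpr h]

variable [DecidableEq X] {a : X} {v : ℕ}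

lemma restrictTo_update_of_notMem (h : a ∉ U) :
    restrictTo U (Function.update f a v) = restrictTo U f := by
  funext x
  by_cases hx : x ∈ U
  · rw [restrictTo_of_mem hx, restrictTo_of_mem hx,
      Function.update_of_ne (ne_of_mem_of_not_mem hx h)]
  · rw [restrictTo_of_notMem hx, restrictTo_of_notMem hx]

lemma restrictTo_union_singleton_update :
    restrictTo (U ∪ {a}) (Function.update f a v) = Function.update (restrictTo U f) a v := by
  funext x
  rcases eq_or_ne x a with rfl | hx
  · simp [restrictTo_of_mem]
  · rw [Function.update_of_ne hx]
    by_cases hxU : x ∈ U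
    · rw [restrictTo_of_mem (Set.mem_union_left _ hxU), restrictTo_of_mem hxU,
        Function.update_of_ne hx]
    · rw [restrictTo_of_notMem (by simp [hxU, hx]), restrictTo_of_notMem hxU]

lemma update_mem_valuationOn_insert (hf : f ∈ ValuationOn V) :
    Function.update f a v ∈ ValuationOn (insert a V) := fun x hx => by
  rw [Set.mem_insert_iff, not_or] at hx
  rw [Function.update_of_ne hx.1, hf x hx.2]

lemma update_zero_mem_valuationOn (hf : f ∈ ValuationOn (insert a V)) :
    Function.update f a 0 ∈ ValuationOn V := fun x hx => by
  rcases eq_or_ne x a with rfl | hxa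
  · exact Function.update_self ..
  · rw [Function.update_of_ne hxa, hf x (by simp [hxa, hx])]

end Valuations

section Agglomeration

variable {X T : Type} [DecidableEq X]

noncomputable def agglomMarking (P : Set X) (p q a : X) (m : X → ℕ) : X → ℕ :=
  Function.update (restrictTo (P \ {p, q}) m) a (m p + m q)

variable {P : Set X} {p q a x : X} {m : X → ℕ} {u : T}

lemma agglomMarking_self : agglomMarking P p q a m a = m p + m q := Function.update_self ..

lemma agglomMarking_of_ne (hx : x ≠ a) :
    agglomMarking P p q a m x = restrictTo (P \ {p, q}) m x :=
  Function.update_of_ne hx ..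

namespace PNet

variable (N : PNet X T)

lemma agglom_places : (N.agglom {p, q} a).places = N.places \ {p, q} ∪ {a} := by
  simp [agglom]

variable {N} (hpq : p ≠ q)
include hpq

lemma agglom_Pre : (N.agglom {p, q} a).Pre u =
    Function.update (restrictTo (N.places \ {p, q}) (N.Pre u)) a (N.Pre u p + N.Pre u q) := by
  simp [agglom, Finset.sum_pair hpq]

lemma agglom_Post : (N.agglom {p, q} a).Post u =
    Function.update (restrictTo (N.places \ {p, q}) (N.Post u)) a (N.Post u p + N.Post u q) := by
  simp [agglom, Finset.sum_pair hpq]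

lemma agglom_m0 : (N.agglom {p, q} a).m0 = agglomMarking N.places p q a N.m0 := by
  simp [agglom, agglomMarking, Finset.sum_pair hpq]

end PNet

end Agglomeration

namespace PNet

variable {X T : Type} {N : PNet X T} {m : X → ℕ}

lemma mem_valuationOn_of_mem_R (hwf : N.WF) (hm : m ∈ N.R) : m ∈ ValuationOn N.places := by
  induction hm with
  | refl => exact hwf.2.2.1
  | tail _ hstep ih =>
    obtain ⟨u, hu, rfl⟩ := hstep
    intro x hx
    obtain ⟨hPre, hPost⟩ := hwf.2.2.2 u hu.1 x hx
    simp [fire, ih x hx, hPre, hPost]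

variable [DecidableEq X] {p q a : X} {u : T} (hpq : p ≠ q)
include hpq

lemma Enabled.agglom (hu : N.Enabled u m) :
    (N.agglom {p, q} a).Enabled u (agglomMarking N.places p q a m) := by
  refine ⟨hu.1, fun x => ?_⟩
  rw [agglom_Pre hpq]
  rcases eq_or_ne x a with rfl | hx
  · rw [Function.update_self, agglomMarking_self]
    exact Nat.add_le_add (hu.2 p) (hu.2 q)
  · rw [Function.update_of_ne hx, agglomMarking_of_ne hx]
    exact Set.indicator_le_indicator (hu.2 x)

lemma agglomMarking_fire (hu : N.Enabled u m) :
    agglomMarking N.places p q a (N.fire u m) =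
      (N.agglom {p, q} a).fire u (agglomMarking N.places p q a m) := by
  funext x
  rw [fire, agglom_Pre hpq, agglom_Post hpq]
  rcases eq_or_ne x a with rfl | hx
  · have := hu.2 p
    have := hu.2 q
    simp only [agglomMarking_self, Function.update_self, fire]
    omega
  · simp only [agglomMarking_of_ne hx, Function.update_of_ne hx]
    by_cases hmem : x ∈ N.places \ {p, q}
    · simp only [restrictTo_of_mem hmem, fire]
    · simp only [restrictTo_of_notMem hmem]

lemma agglomMarking_mem_R_agglom (hm : m ∈ N.R) :
    agglomMarking N.places p q a m ∈ (N.agglom {p, q} a).R := by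
  induction hm with
  | refl => rw [← agglom_m0 hpq]; exact .refl
  | tail _ hstep ih =>
    obtain ⟨u, hu, rfl⟩ := hstep
    exact ih.tail ⟨u, hu.agglom hpq, agglomMarking_fire hpq hu⟩

lemma Enabled.of_agglom (ha : a ∉ N.places) (hwf : N.WF)
    (hu : (N.agglom {p, q} a).Enabled u (agglomMarking N.places p q a m))
    (hp : N.Pre u p ≤ m p) (hq : N.Pre u q ≤ m q) : N.Enabled u m := by
  refine ⟨hu.1, fun x => ?_⟩
  rcases eq_or_ne x p with rfl | hxp
  · exact hp
  rcases eq_or_ne x q with rfl | hxq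
  · exact hq
  by_cases hx : x ∈ N.places
  · have hxa : x ≠ a := ne_of_mem_of_not_mem hx ha
    have hmem : x ∈ N.places \ {p, q} := ⟨hx, by simp [hxp, hxq]⟩
    simpa only [agglom_Pre hpq, Function.update_of_ne hxa, agglomMarking_of_ne hxa,
      restrictTo_of_mem hmem] using hu.2 x
  · simp [(hwf.2.2.2 u hu.1 x hx).1]

end PNet

namespace PNet.ChainAgglomerable

variable {X T : Type} {N : PNet X T} {p q : X} {t : T} {m : X → ℕ}
  (hca : N.ChainAgglomerable p q t)
include hca

lemma enabled (hm : 0 < m p) : N.Enabled t m := by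
  obtain ⟨-, -, -, ht, hPre_p, hPre, -⟩ := hca
  refine ⟨ht, fun x => ?_⟩
  rcases eq_or_ne x p with rfl | hx
  · rwa [hPre_p]
  · rw [hPre x hx]; exact Nat.zero_le _

lemma fire_left : N.fire t m p = m p - 1 := by
  obtain ⟨-, -, hpq, -, hPre_p, -, -, hPost, -⟩ := hca
  simp [fire, hPre_p, hPost p hpq]

lemma fire_right : N.fire t m q = m q + 1 := by
  obtain ⟨-, -, hpq, -, -, hPre, hPost_q, -⟩ := hca
  simp [fire, hPre q hpq.symm, hPost_q]

variable [DecidableEq X] {P : Set X} {a : X}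

lemma agglomMarking_fire (hm : 0 < m p) :
    agglomMarking P p q a (N.fire t m) = agglomMarking P p q a m := by
  funext x
  rcases eq_or_ne x a with rfl | hx
  · rw [agglomMarking_self, agglomMarking_self, hca.fire_left, hca.fire_right]
    omega
  · rw [agglomMarking_of_ne hx, agglomMarking_of_ne hx]
    by_cases hmem : x ∈ P \ {p, q}
    · obtain ⟨-, -, -, -, -, hPre, -, hPost, -⟩ := hca
      have hxp : x ≠ p := fun h => hmem.2 (by simp [h])
      have hxq : x ≠ q := fun h => hmem.2 (by simp [h])
      simp [restrictTo_of_mem hmem, fire, hPre x hxp, hPost x hxq]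
    · rw [restrictTo_of_notMem hmem, restrictTo_of_notMem hmem]

lemma exists_shift (hm : m ∈ N.R) {k : ℕ} (hk : k ≤ m p) :
    ∃ m' ∈ N.R, m' p = m p - k ∧ m' q = m q + k ∧
      agglomMarking P p q a m' = agglomMarking P p q a m := by
  induction k generalizing m with
  | zero => exact ⟨m, hm, rfl, rfl, rfl⟩
  | succ k ih =>
    have hpos : 0 < m p := by omega
    obtain ⟨m', hm', hp, hq, hagg⟩ :=
      ih (hm.tail ⟨t, hca.enabled hpos, rfl⟩) (by rw [hca.fire_left]; omega)
    refine ⟨m', hm', ?_, ?_, ?_⟩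
    · rw [hp, hca.fire_left]; omega
    · rw [hq, hca.fire_right]; omega
    · rw [hagg, hca.agglomMarking_fire hpos]

variable (ha : a ∉ N.places) (hwf : N.WF)
include ha hwf

lemma exists_mem_R_agglomMarking_eq {m₃ : X → ℕ} (hm₃ : m₃ ∈ (N.agglom {p, q} a).R) :
    ∃ m ∈ N.R, m q = 0 ∧ agglomMarking N.places p q a m = m₃ := by
  obtain ⟨-, -, hpq, -, hPre_p, -, -, -, hPost_q, hm0_q⟩ := id hca
  induction hm₃ with
  | refl => exact ⟨N.m0, .refl, hm0_q, (agglom_m0 hpq).symm⟩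
  | tail _ hstep ih =>
    obtain ⟨m, hm, hmq, rfl⟩ := ih
    obtain ⟨u, hu, rfl⟩ := hstep
    have hua := hu.2 a
    rw [agglom_Pre hpq, Function.update_self, agglomMarking_self, hmq] at hua
    rcases eq_or_ne u t with rfl | hut
    · have hpos : 0 < m p := by rw [hPre_p] at hua; omega
      refine ⟨m, hm, hmq, ?_⟩
      rw [← PNet.agglomMarking_fire hpq (hca.enabled hpos), hca.agglomMarking_fire hpos]
    · obtain ⟨m', hm', hp', hq', hagg⟩ :=
        hca.exists_shift (P := N.places) (a := a) hm (k := N.Pre u q) (by omega)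
      rw [← hagg] at hu ⊢
      have hen : N.Enabled u m' := hu.of_agglom hpq ha hwf (by omega) (by omega)
      refine ⟨N.fire u m', hm'.tail ⟨u, hen, rfl⟩, ?_, PNet.agglomMarking_fire hpq hen⟩
      simp [fire, hq', hmq, hPost_q u hu.1 hut]

lemma exists_mem_R_agglomMarking_eq_of_add_eq {m₃ : X → ℕ}
    (hm₃ : m₃ ∈ (N.agglom {p, q} a).R) {j k : ℕ} (hjk : j + k = m₃ a) :
    ∃ m ∈ N.R, m p = j ∧ m q = k ∧ agglomMarking N.places p q a m = m₃ := by
  obtain ⟨m, hm, hmq, rfl⟩ := hca.exists_mem_R_agglomMarking_eq ha hwf hm₃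
  rw [agglomMarking_self, hmq] at hjk
  obtain ⟨m', hm', hp', hq', hagg⟩ := hca.exists_shift hm (k := k) (by omega)
  exact ⟨m', hm', by omega, by omega, hagg⟩

end PNet.ChainAgglomerable

section Abstraction

variable {X T : Type} [DecidableEq X] {N : PNet X T} {P W U : Set X} {p q a : X} {t : T}
  {S : Set (X → ℕ)}

lemma eq_of_agglomMarking_eq {m m' : X → ℕ} (ha : a ∉ P) (hm : m ∈ ValuationOn P)
    (hm' : m' ∈ ValuationOn P) (hp : m p = m' p) (hq : m q = m' q)
    (h : agglomMarking P p q a m = agglomMarking P p q a m') : m = m' := by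
  funext x
  rcases eq_or_ne x p with rfl | hxp
  · exact hp
  rcases eq_or_ne x q with rfl | hxq
  · exact hq
  by_cases hx : x ∈ P
  · have hmem : x ∈ P \ {p, q} := ⟨hx, by simp [hxp, hxq]⟩
    simpa only [agglomMarking_of_ne (ne_of_mem_of_not_mem hx ha), restrictTo_of_mem hmem]
      using congrFun h x
  · rw [hm x hx, hm' x hx]

lemma PNet.restrictTo_agglom_places_update (hp : p ∈ N.places) (hq : q ∈ N.places)
    (f : X → ℕ) :
    restrictTo (N.agglom {p, q} a).places (Function.update f a (f p + f q)) =
      agglomMarking N.places p q a (restrictTo N.places f) := by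
  rw [PNet.agglom_places, restrictTo_union_singleton_update, agglomMarking,
    restrictTo_restrictTo_of_subset Set.sdiff_subset, restrictTo_of_mem hp, restrictTo_of_mem hq]

lemma PNet.agglom_places_union (hp : p ∈ N.places) (hq : q ∈ N.places) :
    W ∪ {p, q, a} ∪ U ∪ (N.agglom {p, q} a).places = insert a (W ∪ U ∪ N.places) := by
  ext x
  simp only [PNet.agglom_places, Set.mem_union, Set.mem_insert_iff, Set.mem_sdiff,
    Set.mem_singleton_iff]
  rcases eq_or_ne x p with rfl | hxp
  · simp [hp]
  rcases eq_or_ne x q with rfl | hxq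
  · simp [hq]
  simp only [hxp, hxq, false_or, not_false_eq_true, and_true]
  tauto

variable (hca : N.ChainAgglomerable p q t) (ha : a ∉ W ∪ U ∪ N.places)
include hca ha

lemma PNet.ChainAgglomerable.projTo_subset_projTo_agglom :
    projTo (liftTo N.R N.places (W ∪ U ∪ N.places) ∩ liftTo S W (W ∪ U ∪ N.places)) U ⊆
      projTo (liftTo (N.agglom {p, q} a).R (N.agglom {p, q} a).places
          (W ∪ {p, q, a} ∪ U ∪ (N.agglom {p, q} a).places) ∩
        liftTo
          {e | e ∈ ValuationOn (W ∪ {p, q, a}) ∧ restrictTo W e ∈ S ∧ e a = e p + e q}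
          (W ∪ {p, q, a}) (W ∪ {p, q, a} ∪ U ∪ (N.agglom {p, q} a).places)) U := by
  obtain ⟨hp, hq, hpq, -⟩ := hca
  simp only [Set.mem_union, not_or] at ha
  obtain ⟨⟨haW, haU⟩, haP⟩ := ha
  rintro _ ⟨g, ⟨⟨hgV, hgR⟩, -, hgS⟩, rfl⟩
  have hg'V : Function.update g a (g p + g q) ∈
      ValuationOn (W ∪ {p, q, a} ∪ U ∪ (N.agglom {p, q} a).places) := by
    rw [PNet.agglom_places_union hp hq]
    exact update_mem_valuationOn_insert hgV
  refine ⟨_, ⟨⟨hg'V, ?_⟩, hg'V, restrictTo_mem_valuationOn, ?_, ?_⟩, ?_⟩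
  · rw [PNet.restrictTo_agglom_places_update hp hq]
    exact PNet.agglomMarking_mem_R_agglom hpq hgR
  · rwa [restrictTo_restrictTo_of_subset Set.subset_union_left,
      restrictTo_update_of_notMem haW]
  · have hpa : p ≠ a := ne_of_mem_of_not_mem hp haP
    have hqa : q ≠ a := ne_of_mem_of_not_mem hq haP
    simp [restrictTo_of_mem, hpa, hqa]
  · exact restrictTo_update_of_notMem haU

variable (hwf : N.WF)
include hwf

lemma PNet.ChainAgglomerable.projTo_agglom_subset_projTo :
    projTo (liftTo (N.agglom {p, q} a).R (N.agglom {p, q} a).places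
          (W ∪ {p, q, a} ∪ U ∪ (N.agglom {p, q} a).places) ∩
        liftTo
          {e | e ∈ ValuationOn (W ∪ {p, q, a}) ∧ restrictTo W e ∈ S ∧ e a = e p + e q}
          (W ∪ {p, q, a}) (W ∪ {p, q, a} ∪ U ∪ (N.agglom {p, q} a).places)) U ⊆
      projTo (liftTo N.R N.places (W ∪ U ∪ N.places) ∩
        liftTo S W (W ∪ U ∪ N.places)) U := by
  obtain ⟨hp, hq, -⟩ := id hca
  simp only [Set.mem_union, not_or] at ha
  obtain ⟨⟨haW, haU⟩, haP⟩ := ha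
  rintro _ ⟨g', ⟨⟨hg'V, hg'R⟩, -, -, hg'S, hg'a⟩, rfl⟩
  rw [restrictTo_of_mem (by simp), restrictTo_of_mem (by simp), restrictTo_of_mem (by simp)]
    at hg'a
  rw [restrictTo_restrictTo_of_subset Set.subset_union_left] at hg'S
  obtain ⟨m, hm, hmp, hmq, hagg⟩ := hca.exists_mem_R_agglomMarking_eq_of_add_eq haP hwf hg'R
    (j := g' p) (k := g' q)
    (by rw [restrictTo_of_mem (by simp [PNet.agglom_places]), hg'a])
  have hpa : p ≠ a := ne_of_mem_of_not_mem hp haP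
  have hqa : q ≠ a := ne_of_mem_of_not_mem hq haP
  set g := Function.update g' a 0
  have hupdate : Function.update g a (g p + g q) = g' := by
    simp [g, Function.update_of_ne hpa, Function.update_of_ne hqa, ← hg'a]
  have hgR : restrictTo N.places g = m := by
    refine eq_of_agglomMarking_eq (p := p) (q := q) haP restrictTo_mem_valuationOn
      (PNet.mem_valuationOn_of_mem_R hwf hm) ?_ ?_ ?_
    · simp [restrictTo_of_mem hp, g, hpa, hmp]
    · simp [restrictTo_of_mem hq, g, hqa, hmq]
    · rw [← PNet.restrictTo_agglom_places_update hp hq, hupdate, hagg]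
  have hgV : g ∈ ValuationOn (W ∪ U ∪ N.places) := by
    rw [PNet.agglom_places_union hp hq] at hg'V
    exact update_zero_mem_valuationOn hg'V
  refine ⟨g, ⟨⟨hgV, hgR ▸ hm⟩, hgV, ?_⟩, restrictTo_update_of_notMem haU⟩
  rwa [restrictTo_update_of_notMem haW]

end Abstraction

theorem netAbstraction_chainAgglomeration_general {X T₁ T₂ : Type} [DecidableEq X]
    (N₁ : PNet X T₁) (N₂ : PNet X T₂) (hwf₂ : N₂.WF)
    (W : Set X) (S : Set (X → ℕ))
    (habs : NetAbstraction N₁ W S N₂)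
    (p q : X) (t : T₂) (hca : N₂.ChainAgglomerable p q t)
    (a : X) (ha : a ∉ W ∪ N₁.places ∪ N₂.places) :
    NetAbstraction N₁ (W ∪ {p, q, a})
      {e | e ∈ ValuationOn (W ∪ {p, q, a}) ∧ restrictTo W e ∈ S ∧ e a = e p + e q}
      (N₂.agglom {p, q} a) := by
  unfold NetAbstraction at habs ⊢
  rw [habs]
  exact (hca.projTo_subset_projTo_agglom ha).antisymm
    (hca.projTo_agglom_subset_projTo ha hwf₂)

/-- Net-abstractions are preserved by chain agglomeration in the
second net: if `p`, `q` are chain-agglomerable in `N₂` and `a` is fresh, then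
`(N₁, (W ∪ {p, q, a}, S'), N₃)` is a net-abstraction, where `N₃` is the chain
agglomeration of `p` and `q` in `N₂` as `a` and `S'` extends `S` with the equation
`a = p + q`. -/
theorem netAbstraction_chainAgglomeration {X T₁ T₂ : Type} [Countable X] [DecidableEq X]
    (N₁ : PNet X T₁) (N₂ : PNet X T₂) (hwf₁ : N₁.WF) (hwf₂ : N₂.WF)
    (W : Set X) (hW : W.Finite) (S : Set (X → ℕ)) (hS : S ⊆ ValuationOn W)
    (habs : NetAbstraction N₁ W S N₂)
    (p q : X) (t : T₂) (hca : N₂.ChainAgglomerable p q t)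
    (a : X) (ha : a ∉ W ∪ N₁.places ∪ N₂.places) :
    NetAbstraction N₁ (W ∪ {p, q, a})
      {e | e ∈ ValuationOn (W ∪ {p, q, a}) ∧ restrictTo W e ∈ S ∧ e a = e p + e q}
      (N₂.agglom {p, q} a) :=
  netAbstraction_chainAgglomeration_general N₁ N₂ hwf₂ W S habs p q t hca a ha
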